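/- Let 𝒜_n denote the surface-area measure on the unit sphere S^{2n−1} = {a ∈ ℂⁿ : ‖a‖ = 1}, whose total mass is 𝒜_n(S^{2n−1}) = 2πⁿ/(n−1)!, and let σ_n = 𝒜_n / 𝒜_n(S^{2n−1}) be the normalized area measure. Then for every real α ≥ 1 there exists a constant C_α > 0 such that for every integer n ≥ 2 and every v ∈ ℂⁿ with ‖v‖ = 1, ∫_{S^{2n−1}} |log |⟨a, v⟩||^α dσ_n(a) ≤ C_α (log n)^α. -/

import Mathlib

/-!
Let `v` be a unit vector of `ℂⁿ`. The cone over the cap `{a : |⟪a, v⟫| ≤ δ}` of the sphere lies in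
the slab `{x : ‖x‖ < 1, |⟪x, v⟫| ≤ δ}`. After a unitary change of coordinates taking `v` to the
first basis vector, the slab lies in the product of a disc of radius `δ` with the unit ball of
`ℂⁿ⁻¹`, so `σₙ {|⟪a, v⟫| ≤ δ} ≤ π δ² vol(Bₙ₋₁) / vol(Bₙ) = n δ²`. Hence
`σₙ {|log |⟪a, v⟫|| ≥ t} ≤ n e^{-2t} ≤ e^{-t}` for `t ≥ log n`, and the layer-cake formula gives
`∫ |log |⟪a, v⟫||^α dσₙ ≤ (log n)^α + Γ(α + 1)`, which is at most `C_α (log n)^α` for `n ≥ 2`.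
-/
open MeasureTheory
open scoped InnerProductSpace ENNReal Real

noncomputable instance (n : ℕ) : MeasurableSpace (EuclideanSpace ℂ (Fin n)) :=
  MeasurableSpace.comap WithLp.ofLp MeasurableSpace.pi
instance (n : ℕ) : BorelSpace (EuclideanSpace ℂ (Fin n)) := PiLp.borelSpace 2
noncomputable instance (n : ℕ) : MeasureSpace (EuclideanSpace ℂ (Fin n)) :=
  ⟨(Measure.pi fun _ => volume).map (WithLp.toLp 2)⟩

/-- The surface-area measure `𝒜_n` on the unit sphere `S^{2n-1} ⊂ ℂⁿ`. -/
noncomputable def sphereArea (n : ℕ) :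
    Measure (Metric.sphere (0 : EuclideanSpace ℂ (Fin n)) 1) :=
  (volume : Measure (EuclideanSpace ℂ (Fin n))).toSphere

/-- The normalized area measure `σ_n = 𝒜_n / 𝒜_n(S^{2n-1})` on the unit sphere of `ℂⁿ`. -/
noncomputable def sphereUniform (n : ℕ) :
    Measure (Metric.sphere (0 : EuclideanSpace ℂ (Fin n)) 1) :=
  (sphereArea n Set.univ)⁻¹ • sphereArea n

open Set Metric
open scoped Pointwise

theorem LinearIsometryEquiv.measurePreserving_of_isAddHaarMeasure {𝕜 E : Type*} [Semiring 𝕜]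
    [NormedAddCommGroup E] [Module 𝕜 E] [ProperSpace E] [MeasurableSpace E] [BorelSpace E]
    (μ : Measure E) [μ.IsAddHaarMeasure] (U : E ≃ₗᵢ[𝕜] E) : MeasurePreserving U μ μ := by
  -- `μ.map U` is again an add Haar measure, hence a multiple of `μ`, and `U` preserves the unit ball.
  refine ⟨U.continuous.measurable, ?_⟩
  have : (μ.map U).IsAddHaarMeasure := U.toContinuousLinearEquiv.isAddHaarMeasure_map μ
  have hball : μ.map U (ball 0 1) = μ (ball 0 1) := by
    rw [Measure.map_apply U.continuous.measurable measurableSet_ball, U.preimage_ball, map_zero]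
  have hpos : μ (ball 0 1) ≠ 0 := (measure_ball_pos μ 0 one_pos).ne'
  rw [measure_eq_sub_vadd (μ.map U) μ hpos measure_ball_lt_top.ne, hball,
    ENNReal.div_self hpos measure_ball_lt_top.ne, one_smul]

namespace MeasureTheory.Measure

variable {E : Type*} [NormedAddCommGroup E] [NormedSpace ℝ E] [FiniteDimensional ℝ E]
  [MeasurableSpace E] [BorelSpace E] [Nontrivial E]

theorem toSphere_apply_div_toSphere_univ (μ : Measure E) [μ.IsAddHaarMeasure]
    {s : Set (sphere (0 : E) 1)} (hs : MeasurableSet s) :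
    μ.toSphere s / μ.toSphere univ = μ (Ioo (0 : ℝ) 1 • (Subtype.val '' s)) / μ (ball 0 1) := by
  rw [toSphere_apply' μ hs, toSphere_apply_univ,
    ENNReal.mul_div_mul_left _ _ (by simp [Module.finrank_pos.ne']) (ENNReal.natCast_ne_top _)]

end MeasureTheory.Measure

theorem Ioo_smul_image_sphere_subset {𝕜 E : Type*} [RCLike 𝕜] [NormedAddCommGroup E]
    [InnerProductSpace 𝕜 E] [NormedSpace ℝ E] [IsScalarTower ℝ 𝕜 E] (v : E) (δ : ℝ) :
    Ioo (0 : ℝ) 1 • (Subtype.val '' {a : sphere (0 : E) 1 | ‖⟪(a : E), v⟫_𝕜‖ ≤ δ}) ⊆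
      {x : E | ‖x‖ < 1 ∧ ‖⟪x, v⟫_𝕜‖ ≤ δ} := by
  rintro _ ⟨r, ⟨hr0, hr1⟩, _, ⟨a, ha, rfl⟩, rfl⟩
  have ha1 : ‖(a : E)‖ = 1 := by simp
  refine ⟨by simpa [norm_smul, abs_of_pos hr0, ha1] using hr1, ?_⟩
  change ‖⟪r • (a : E), v⟫_𝕜‖ ≤ δ
  rw [RCLike.real_smul_eq_coe_smul (K := 𝕜), inner_smul_left, norm_mul, RCLike.norm_conj,
    RCLike.norm_ofReal, abs_of_pos hr0]
  exact (mul_le_of_le_one_left (norm_nonneg _) hr1.le).trans ha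

local notation "ℂ^" n:max => EuclideanSpace ℂ (Fin n)

theorem measurePreserving_toLp_complex (n : ℕ) :
    MeasurePreserving (MeasurableEquiv.toLp 2 (Fin n → ℂ)) volume (volume : Measure (ℂ^n)) :=
  ⟨(MeasurableEquiv.toLp 2 _).measurable, rfl⟩

instance (n : ℕ) : (volume : Measure (ℂ^n)).IsAddHaarMeasure :=
  (PiLp.continuousLinearEquiv 2 ℂ (fun _ : Fin n => ℂ)).symm.isAddHaarMeasure_map volume

theorem volume_sum_norm_sq_lt_one (n : ℕ) :
    volume {z : Fin n → ℂ | ∑ i, ‖z i‖ ^ 2 < 1} = ENNReal.ofReal (π ^ n / n.factorial) := by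
  have := Complex.volume_sum_rpow_lt_one (Fin n) one_le_two
  simp only [Real.rpow_two] at this
  rw [this]
  norm_num [Real.Gamma_nat_eq_factorial]

theorem volume_ball_zero_one_complex (n : ℕ) :
    volume (ball (0 : ℂ^n) 1) = ENNReal.ofReal (π ^ n / n.factorial) := by
  rw [← (measurePreserving_toLp_complex n).measure_preimage_equiv, ← volume_sum_norm_sq_lt_one]
  congr 1
  ext z
  simp [EuclideanSpace.norm_eq, Real.sqrt_lt' one_pos]

theorem volume_norm_lt_one_norm_apply_zero_le (m : ℕ) {δ : ℝ} (hδ : 0 ≤ δ) :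
    volume {y : ℂ^(m + 1) | ‖y‖ < 1 ∧ ‖y 0‖ ≤ δ} ≤
      ENNReal.ofReal (π * δ ^ 2 * (π ^ m / m.factorial)) := by
  rw [← (measurePreserving_toLp_complex (m + 1)).measure_preimage_equiv,
    ← (volume_preserving_piFinSuccAbove (fun _ : Fin (m + 1) => ℂ) 0).symm.measure_preimage_equiv]
  calc _ ≤ volume (closedBall (0 : ℂ) δ ×ˢ {z : Fin m → ℂ | ∑ i, ‖z i‖ ^ 2 < 1}) := by
        refine measure_mono ?_
        rintro ⟨c, z⟩ ⟨hy, hc⟩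
        simp only [EuclideanSpace.norm_eq, Real.sqrt_lt' one_pos,
          MeasurableEquiv.piFinSuccAbove_symm_apply, Fin.insertNthEquiv_zero,
          MeasurableEquiv.toLp_apply, Fin.consEquiv_apply, Fin.sum_univ_succ, Fin.cons_zero,
          Fin.cons_succ, one_pow] at hy hc
        exact ⟨mem_closedBall_zero_iff.2 hc, show ∑ i, ‖z i‖ ^ 2 < 1 by linarith [sq_nonneg ‖c‖]⟩
    _ = _ := by
        rw [Measure.volume_eq_prod, Measure.prod_prod, Complex.volume_closedBall,
          volume_sum_norm_sq_lt_one, ← ENNReal.ofReal_pow hδ, ← ENNReal.ofReal_coe_nnreal,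
          NNReal.coe_real_pi, ← ENNReal.ofReal_mul (by positivity),
          ← ENNReal.ofReal_mul (by positivity), mul_comm (δ ^ 2)]

theorem exists_orthonormalBasis_apply_zero_eq {𝕜 : Type*} [RCLike 𝕜] {m : ℕ}
    {v : EuclideanSpace 𝕜 (Fin (m + 1))} (hv : ‖v‖ = 1) :
    ∃ b : OrthonormalBasis (Fin (m + 1)) 𝕜 (EuclideanSpace 𝕜 (Fin (m + 1))), b 0 = v := by
  have horth : Orthonormal 𝕜 (({0} : Set (Fin (m + 1))).domRestrict fun _ => v) :=
    ⟨fun _ => hv, fun i j hij => (hij (Subtype.ext (i.2.trans j.2.symm))).elim⟩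
  obtain ⟨b, hb⟩ := horth.exists_orthonormalBasis_extension_of_card_eq (by simp)
  exact ⟨b, hb 0 rfl⟩

theorem volume_norm_lt_one_norm_inner_le (m : ℕ) {v : ℂ^(m + 1)} (hv : ‖v‖ = 1) {δ : ℝ}
    (hδ : 0 ≤ δ) :
    volume {x : ℂ^(m + 1) | ‖x‖ < 1 ∧ ‖⟪x, v⟫_ℂ‖ ≤ δ} ≤
      ENNReal.ofReal (π * δ ^ 2 * (π ^ m / m.factorial)) := by
  obtain ⟨b, hb⟩ := exists_orthonormalBasis_apply_zero_eq hv
  have hrot : {x : ℂ^(m + 1) | ‖x‖ < 1 ∧ ‖⟪x, v⟫_ℂ‖ ≤ δ} =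
      b.repr ⁻¹' {y | ‖y‖ < 1 ∧ ‖y 0‖ ≤ δ} := by
    ext x
    simp [b.repr_apply_apply, hb, norm_inner_symm]
  rw [hrot]
  exact ((b.repr.measurePreserving_of_isAddHaarMeasure volume).measure_preimage_le _).trans
    (volume_norm_lt_one_norm_apply_zero_le m hδ)

instance (n : ℕ) : IsZeroOrProbabilityMeasure (sphereUniform n) := by
  unfold sphereUniform; infer_instance

theorem sphereUniform_norm_inner_le {n : ℕ} (hn : 0 < n) {v : ℂ^n} (hv : ‖v‖ = 1) {δ : ℝ}
    (hδ : 0 ≤ δ) :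
    sphereUniform n {a | ‖⟪(a : ℂ^n), v⟫_ℂ‖ ≤ δ} ≤ ENNReal.ofReal (n * δ ^ 2) := by
  obtain ⟨m, rfl⟩ := Nat.exists_eq_add_one_of_ne_zero hn.ne'
  have hs : MeasurableSet {a : sphere (0 : ℂ^(m + 1)) 1 | ‖⟪(a : ℂ^(m + 1)), v⟫_ℂ‖ ≤ δ} :=
    measurableSet_le (by fun_prop) measurable_const
  rw [sphereUniform, Measure.smul_apply, smul_eq_mul, ← ENNReal.div_eq_inv_mul, sphereArea,
    Measure.toSphere_apply_div_toSphere_univ _ hs, volume_ball_zero_one_complex]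
  calc _ ≤ ENNReal.ofReal (π * δ ^ 2 * (π ^ m / m.factorial)) /
        ENNReal.ofReal (π ^ (m + 1) / (m + 1).factorial) :=
        ENNReal.div_le_div_right ((measure_mono (Ioo_smul_image_sphere_subset v δ)).trans
          (volume_norm_lt_one_norm_inner_le m hv hδ)) _
    _ = _ := by
        rw [← ENNReal.ofReal_div_of_pos (by positivity)]
        congr 1
        rw [Nat.factorial_succ]
        field_simp
        push_cast
        ring

theorem Real.le_exp_neg_of_le_abs_log {r t : ℝ} (hr0 : 0 ≤ r) (hr1 : r ≤ 1)
    (ht : t ≤ |Real.log r|) : r ≤ Real.exp (-t) := by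
  rcases hr0.eq_or_lt with rfl | hr0
  · exact (Real.exp_pos _).le
  rw [abs_of_nonpos (Real.log_nonpos hr0.le hr1)] at ht
  rw [← Real.exp_log hr0]
  exact Real.exp_le_exp.2 (by linarith)

theorem sphereUniform_le_abs_log_norm_inner_le {n : ℕ} (hn : 0 < n) {v : ℂ^n} (hv : ‖v‖ = 1)
    {t : ℝ} (ht : Real.log n ≤ t) :
    sphereUniform n {a | t ≤ |Real.log ‖⟪(a : ℂ^n), v⟫_ℂ‖|} ≤ ENNReal.ofReal (Real.exp (-t)) := by
  have hsub : {a : sphere (0 : ℂ^n) 1 | t ≤ |Real.log ‖⟪(a : ℂ^n), v⟫_ℂ‖|} ⊆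
      {a | ‖⟪(a : ℂ^n), v⟫_ℂ‖ ≤ Real.exp (-t)} := fun a ha =>
    Real.le_exp_neg_of_le_abs_log (norm_nonneg _)
      ((norm_inner_le_norm _ _).trans (by simp [hv])) ha
  refine (measure_mono hsub).trans ((sphereUniform_norm_inner_le hn hv (Real.exp_pos _).le).trans
    (ENNReal.ofReal_le_ofReal ?_))
  have hnt : (n : ℝ) ≤ Real.exp t := by
    rwa [← Real.log_le_iff_le_exp (by exact_mod_cast hn)]
  calc (n : ℝ) * Real.exp (-t) ^ 2 ≤ Real.exp t * Real.exp (-t) ^ 2 := by gcongr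
    _ = Real.exp (-t) := by rw [sq, ← mul_assoc, ← Real.exp_add]; simp

theorem lintegral_Ioc_rpow_sub_one {p L : ℝ} (hp : 0 < p) (hL : 0 ≤ L) :
    ∫⁻ t in Ioc 0 L, ENNReal.ofReal (t ^ (p - 1)) = ENNReal.ofReal (L ^ p / p) := by
  have hp' : -1 < p - 1 := by linarith
  rw [← ofReal_integral_eq_lintegral_ofReal
    ((intervalIntegrable_iff_integrableOn_Ioc_of_le hL).1
      (intervalIntegral.intervalIntegrable_rpow' hp'))
    ((ae_restrict_mem measurableSet_Ioc).mono fun t ht => Real.rpow_nonneg ht.1.le _),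
    ← intervalIntegral.integral_of_le hL, integral_rpow (Or.inl hp'), sub_add_cancel,
    Real.zero_rpow hp.ne', sub_zero]

theorem lintegral_Ioi_exp_neg_mul_rpow_sub_one {p : ℝ} (hp : 0 < p) :
    ∫⁻ t in Ioi 0, ENNReal.ofReal (Real.exp (-t) * t ^ (p - 1)) =
      ENNReal.ofReal (Real.Gamma p) := by
  rw [Real.Gamma_eq_integral hp, ofReal_integral_eq_lintegral_ofReal
    (Real.GammaIntegral_convergent hp)
    ((ae_restrict_mem measurableSet_Ioi).mono fun t ht => by
      have : (0 : ℝ) < t := ht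
      positivity)]

theorem lintegral_rpow_le_of_meas_le_exp_neg {Ω : Type*} [MeasurableSpace Ω] {μ : Measure Ω}
    [IsZeroOrProbabilityMeasure μ] {f : Ω → ℝ} (hf_nn : 0 ≤ᵐ[μ] f) (hf : AEMeasurable f μ)
    {p L : ℝ} (hp : 0 < p) (hL : 0 ≤ L)
    (htail : ∀ t, L < t → μ {a | t ≤ f a} ≤ ENNReal.ofReal (Real.exp (-t))) :
    ∫⁻ a, ENNReal.ofReal (f a ^ p) ∂μ ≤ ENNReal.ofReal (L ^ p + Real.Gamma (p + 1)) := by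
  rw [lintegral_rpow_eq_lintegral_meas_le_mul μ hf_nn hf hp, ← Ioc_union_Ioi_eq_Ioi hL,
    lintegral_union measurableSet_Ioi (Ioc_disjoint_Ioi le_rfl)]
  have hsmall : ∫⁻ t in Ioc 0 L, μ {a | t ≤ f a} * ENNReal.ofReal (t ^ (p - 1)) ≤
      ENNReal.ofReal (L ^ p / p) :=
    (lintegral_mono fun t => mul_le_of_le_one_left zero_le prob_le_one).trans_eq
      (lintegral_Ioc_rpow_sub_one hp hL)
  have hlarge : ∫⁻ t in Ioi L, μ {a | t ≤ f a} * ENNReal.ofReal (t ^ (p - 1)) ≤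
      ENNReal.ofReal (Real.Gamma p) :=
    calc _ ≤ ∫⁻ t in Ioi L, ENNReal.ofReal (Real.exp (-t) * t ^ (p - 1)) :=
          setLIntegral_mono' measurableSet_Ioi fun t ht => by
            rw [ENNReal.ofReal_mul (Real.exp_pos _).le]
            gcongr
            exact htail t ht
      _ ≤ ∫⁻ t in Ioi 0, ENNReal.ofReal (Real.exp (-t) * t ^ (p - 1)) :=
          lintegral_mono_set (Ioi_subset_Ioi hL)
      _ = _ := lintegral_Ioi_exp_neg_mul_rpow_sub_one hp
  calc _ ≤ ENNReal.ofReal p * (ENNReal.ofReal (L ^ p / p) + ENNReal.ofReal (Real.Gamma p)) := by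
        gcongr
    _ = _ := by
        rw [← ENNReal.ofReal_add (by positivity) (Real.Gamma_pos_of_pos hp).le,
          ← ENNReal.ofReal_mul hp.le, Real.Gamma_add_one hp.ne']
        congr 1
        field_simp

/-- Logarithmic moment bound for the normalized area measures of spheres: for every
`α ≥ 1` there is `C_α > 0` with
`∫_{S^{2n-1}} |log|⟨a,v⟩||^α dσ_n(a) ≤ C_α (log n)^α` for all `n ≥ 2` and unit `v`. -/
theorem sphere_log_moment (α : ℝ) (hα : 1 ≤ α) :
    ∃ C : ℝ, 0 < C ∧ ∀ n : ℕ, 2 ≤ n → ∀ v : EuclideanSpace ℂ (Fin n), ‖v‖ = 1 →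
      ∫⁻ a : Metric.sphere (0 : EuclideanSpace ℂ (Fin n)) 1,
          ENNReal.ofReal (|Real.log ‖⟪(a : EuclideanSpace ℂ (Fin n)), v⟫_ℂ‖| ^ α)
          ∂(sphereUniform n) ≤
        ENNReal.ofReal (C * Real.log n ^ α) := by
  have hα0 : 0 < α := by linarith
  have hlog2 : 0 < Real.log 2 := Real.log_pos one_lt_two
  refine ⟨1 + Real.Gamma (α + 1) / Real.log 2 ^ α, by positivity, fun n hn v hv => ?_⟩
  have hL : Real.log 2 ≤ Real.log n := Real.log_le_log two_pos (by exact_mod_cast hn)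
  have hmeas : Measurable fun a : sphere (0 : ℂ^n) 1 => |Real.log ‖⟪(a : ℂ^n), v⟫_ℂ‖| := by
    fun_prop
  calc _ ≤ ENNReal.ofReal (Real.log n ^ α + Real.Gamma (α + 1)) :=
        lintegral_rpow_le_of_meas_le_exp_neg (ae_of_all _ fun _ => abs_nonneg _)
          hmeas.aemeasurable hα0 (hlog2.le.trans hL)
          fun t ht => sphereUniform_le_abs_log_norm_inner_le (by omega) hv ht.le
    _ ≤ _ := by
        refine ENNReal.ofReal_le_ofReal ?_
        have hpow : Real.log 2 ^ α ≤ Real.log n ^ α := by gcongr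
        rw [add_mul, one_mul, div_mul_eq_mul_div, add_le_add_iff_left,
          le_div_iff₀ (by positivity)]
        gcongr
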